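/- Fix an integer J > 2 and a real number r with 2/(3J) ≤ r < 1/(J+1). Let V = {(0,0), (0,J), (J,0), (J,2J), (2J,J), (2J,2J)} ⊂ ℝ² and let P({0,…,J}) = {(x_0 + x_1, x_0 + x_2) : x_0, x_1, x_2 ∈ {0, 1, …, J}}. Then r·conv(V) + P({0,…,J}) ⊇ (1,1) + conv(V). -/

import Mathlib

/-!
`conv V` is the hexagon `{0 ≤ x, y ≤ 2J, |x - y| ≤ J}`, i.e. the zonotope spanned by `J (1,1)`,
`J (1,0)`, `J (0,1)`, and `P` is the set of its integer points. Since `r J ≥ 2/3`, `r • conv V`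
contains the small hexagon `H` with parameter `2/3`, and the integer translates of the part of `H`
with positive coordinates already cover the plane. So `q + (1,1) = h + (a,b)` with
`h ∈ H` and `(a,b)` integral, and integrality forces `(a,b)` into the big hexagon, hence into `P`.
-/

open Set Pointwise

def hexagon (N : ℝ) : Set (ℝ × ℝ) :=
  {p | 0 ≤ p.1 ∧ p.1 ≤ 2 * N ∧ 0 ≤ p.2 ∧ p.2 ≤ 2 * N ∧ p.1 - p.2 ≤ N ∧ p.2 - p.1 ≤ N}

def hexagonVertices (N : ℝ) : Set (ℝ × ℝ) :=
  {(0, 0), (0, N), (N, 0), (N, 2 * N), (2 * N, N), (2 * N, 2 * N)}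

-- Mathlib's `parallelepiped v` is the Minkowski sum of the segments `[0, v i]`, also for linearly
-- dependent `v`, so here it is a zonotope.
def hexagonGenerators (N : ℝ) : Fin 3 → ℝ × ℝ :=
  ![(N, N), (N, 0), (0, N)]

theorem convexHull_hexagonVertices (N : ℝ) :
    convexHull ℝ (hexagonVertices N) = parallelepiped (hexagonGenerators N) := by
  have hsum : ∑ i, ({0, hexagonGenerators N i} : Set (ℝ × ℝ)) =
      {(2 * N, 2 * N), (N, 2 * N), (0, N), (2 * N, N), (N, 0), (N, N), (0, 0)} := by
    simp only [Fin.sum_univ_three, hexagonGenerators, insert_eq, union_add, add_union,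
      singleton_add_singleton]
    ext
    simp only [Prod.zero_eq_mk, Prod.mk_add_mk, add_zero, zero_add, Matrix.cons_val_zero,
      Matrix.cons_val_one, Matrix.cons_val, union_singleton, union_insert, mem_insert_iff,
      mem_singleton_iff, Prod.mk.injEq, left_eq_add, true_and, and_true, and_self, true_or,
      or_true, insert_eq_of_mem, two_mul]
    tauto
  rw [parallelepiped_eq_convexHull, hsum]
  apply subset_antisymm
  · exact convexHull_mono (by simp [hexagonVertices, insert_subset_iff])
  · refine convexHull_min ?_ (convex_convexHull ℝ _)
    have hvert : hexagonVertices N ⊆ convexHull ℝ (hexagonVertices N) := subset_convexHull ℝ _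
    have hmid : ((N, N) : ℝ × ℝ) ∈ convexHull ℝ (hexagonVertices N) := by
      refine segment_subset_convexHull (x := (0, 0)) (y := (2 * N, 2 * N))
        (by simp [hexagonVertices]) (by simp [hexagonVertices])
        ⟨1 / 2, 1 / 2, by norm_num, by norm_num, by norm_num, ?_⟩
      ext <;> simp
    simp only [insert_subset_iff, singleton_subset_iff, hmid]
    refine ⟨?_, ?_, ?_, ?_, ?_, trivial, ?_⟩ <;> exact hvert (by simp [hexagonVertices])

theorem sum_smul_hexagonGenerators (t : Fin 3 → ℝ) (N : ℝ) :
    ∑ i, t i • hexagonGenerators N i = ((t 0 + t 1) * N, (t 0 + t 2) * N) := by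
  simp [hexagonGenerators, Fin.sum_univ_three, add_mul]

theorem exists_add_eq_of_mem_hexagon {N s t : ℝ} (h : (s, t) ∈ hexagon N) :
    ∃ c d e : ℝ, c ∈ Icc 0 N ∧ d ∈ Icc 0 N ∧ e ∈ Icc 0 N ∧ s = c + d ∧ t = c + e := by
  obtain ⟨hs0, hs, ht0, ht, hst, hts⟩ := h
  set c := max (s - N) (max (t - N) 0)
  have hc : s - N ≤ c ∧ t - N ≤ c ∧ 0 ≤ c := by simp [c]
  have hc' : c ≤ N ∧ c ≤ s ∧ c ≤ t := by
    simp only [c, max_le_iff]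
    refine ⟨⟨?_, ?_, ?_⟩, ⟨?_, ?_, ?_⟩, ⟨?_, ?_, ?_⟩⟩ <;> linarith
  exact ⟨c, s - c, t - c, ⟨hc.2.2, hc'.1⟩, ⟨by linarith, by linarith⟩, ⟨by linarith, by linarith⟩,
    by ring, by ring⟩

theorem parallelepiped_hexagonGenerators {N : ℝ} (hN : 0 < N) :
    parallelepiped (hexagonGenerators N) = hexagon N := by
  apply subset_antisymm
  · intro p hp
    obtain ⟨t, ⟨ht0, ht1⟩, rfl⟩ := (mem_parallelepiped_iff _ p).1 hp
    rw [sum_smul_hexagonGenerators]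
    have h0 : ∀ i, 0 ≤ t i * N := fun i => mul_nonneg (ht0 i) hN.le
    have h1 : ∀ i, t i * N ≤ N := fun i => mul_le_of_le_one_left hN.le (ht1 i)
    refine ⟨?_, ?_, ?_, ?_, ?_, ?_⟩ <;> dsimp only <;>
      linarith [h0 0, h0 1, h0 2, h1 0, h1 1, h1 2]
  · rintro ⟨s, t⟩ hst
    obtain ⟨c, d, e, hc, hd, he, rfl, rfl⟩ := exists_add_eq_of_mem_hexagon hst
    have hI : ∀ z ∈ Icc 0 N, z / N ∈ Icc (0 : ℝ) 1 :=
      fun z hz => ⟨div_nonneg hz.1 hN.le, (div_le_one hN).2 hz.2⟩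
    rw [mem_parallelepiped_iff]
    refine ⟨![c / N, d / N, e / N], ⟨fun i => ?_, fun i => ?_⟩, ?_⟩
    · fin_cases i
      exacts [(hI c hc).1, (hI d hd).1, (hI e he).1]
    · fin_cases i
      exacts [(hI c hc).2, (hI d hd).2, (hI e he).2]
    · rw [sum_smul_hexagonGenerators]
      simp [add_mul, div_mul_cancel₀ _ hN.ne']

theorem convexHull_hexagonVertices_eq_hexagon {N : ℝ} (hN : 0 < N) :
    convexHull ℝ (hexagonVertices N) = hexagon N := by
  rw [convexHull_hexagonVertices, parallelepiped_hexagonGenerators hN]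

theorem hexagon_mono {N M : ℝ} (h : N ≤ M) : hexagon N ⊆ hexagon M := by
  rintro p ⟨h1, h2, h3, h4, h5, h6⟩
  exact ⟨h1, by linarith, h3, by linarith, by linarith, by linarith⟩

theorem smul_hexagonVertices (r N : ℝ) : r • hexagonVertices N = hexagonVertices (r * N) := by
  simp [hexagonVertices, smul_set_insert, mul_left_comm r 2 N]

-- Write `x = ⌈x⌉ - 1 + f`, `y = ⌈y⌉ - 1 + g` with `f, g ∈ (0, 1]`; if `|f - g| > 2/3`, replace
-- the smaller of `f, g` by itself plus `1`.
theorem exists_intCast_sub_mem_hexagon (x y : ℝ) :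
    ∃ a b : ℤ, (x - a, y - b) ∈ hexagon (2 / 3) ∧ 0 < x - a ∧ 0 < y - b := by
  have hx := Int.ceil_lt_add_one x
  have hx' := Int.le_ceil x
  have hy := Int.ceil_lt_add_one y
  have hy' := Int.le_ceil y
  by_cases hyx : y - ⌈y⌉ > x - ⌈x⌉ + 2 / 3
  · refine ⟨⌈x⌉ - 2, ⌈y⌉ - 1, ⟨?_, ?_, ?_, ?_, ?_, ?_⟩, ?_, ?_⟩ <;> push_cast <;> linarith
  by_cases hxy : x - ⌈x⌉ > y - ⌈y⌉ + 2 / 3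
  · refine ⟨⌈x⌉ - 1, ⌈y⌉ - 2, ⟨?_, ?_, ?_, ?_, ?_, ?_⟩, ?_, ?_⟩ <;> push_cast <;> linarith
  · refine ⟨⌈x⌉ - 1, ⌈y⌉ - 1, ⟨?_, ?_, ?_, ?_, ?_, ?_⟩, ?_, ?_⟩ <;> push_cast <;> linarith

theorem intCast_mem_hexagon {N a b : ℤ} {x y : ℝ} (hxy : (x, y) ∈ hexagon N)
    (hab : (x + 1 - a, y + 1 - b) ∈ hexagon (2 / 3)) (ha : 0 < x + 1 - a) (hb : 0 < y + 1 - b) :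
    ((a : ℝ), (b : ℝ)) ∈ hexagon N := by
  obtain ⟨hx0, hx2, hy0, hy2, hx_sub, hy_sub⟩ := hxy
  obtain ⟨-, hu, -, hv, huv, hvu⟩ := hab
  dsimp only at *
  have h₁ : -1 < a := (Int.cast_lt (R := ℝ)).1 (by push_cast; linarith)
  have h₂ : -1 < b := (Int.cast_lt (R := ℝ)).1 (by push_cast; linarith)
  have h₃ : a < 2 * N + 1 := (Int.cast_lt (R := ℝ)).1 (by push_cast; linarith)
  have h₄ : b < 2 * N + 1 := (Int.cast_lt (R := ℝ)).1 (by push_cast; linarith)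
  have h₅ : a - b < N + 1 := (Int.cast_lt (R := ℝ)).1 (by push_cast; linarith)
  have h₆ : b - a < N + 1 := (Int.cast_lt (R := ℝ)).1 (by push_cast; linarith)
  refine ⟨?_, ?_, ?_, ?_, ?_, ?_⟩ <;> dsimp only <;> norm_cast <;> omega

def hexagonLatticePoints (J : ℕ) : Set (ℝ × ℝ) :=
  {p | ∃ x₀ x₁ x₂ : ℕ, x₀ ≤ J ∧ x₁ ≤ J ∧ x₂ ≤ J ∧
    p = (((x₀ : ℝ) + (x₁ : ℝ), (x₀ : ℝ) + (x₂ : ℝ)) : ℝ × ℝ)}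

theorem intCast_mem_hexagonLatticePoints {J : ℕ} {a b : ℤ} (h : ((a : ℝ), (b : ℝ)) ∈ hexagon J) :
    ((a : ℝ), (b : ℝ)) ∈ hexagonLatticePoints J := by
  obtain ⟨ha0, ha, hb0, hb, hab, hba⟩ := h
  dsimp only at *
  have ha0 : 0 ≤ a := by exact_mod_cast ha0
  have hb0 : 0 ≤ b := by exact_mod_cast hb0
  have ha : a ≤ 2 * J := by exact_mod_cast ha
  have hb : b ≤ 2 * J := by exact_mod_cast hb
  have hab : a - b ≤ J := by exact_mod_cast hab
  have hba : b - a ≤ J := by exact_mod_cast hba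
  lift a to ℕ using ha0
  lift b to ℕ using hb0
  obtain ⟨x₀, x₁, x₂, h₀, h₁, h₂, rfl, rfl⟩ :
      ∃ x₀ x₁ x₂, x₀ ≤ J ∧ x₁ ≤ J ∧ x₂ ≤ J ∧ a = x₀ + x₁ ∧ b = x₀ + x₂ :=
    ⟨max a b - J, a - (max a b - J), b - (max a b - J), by omega, by omega, by omega,
      by omega, by omega⟩
  exact ⟨x₀, x₁, x₂, h₀, h₁, h₂, by push_cast; rfl⟩

theorem stmt15_general (J : ℕ) (hJ : 2 < J) (r : ℝ)
    (hr1 : 2 / (3 * (J : ℝ)) ≤ r)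
    (V : Set (ℝ × ℝ))
    (hV : V = {((0 : ℝ), (0 : ℝ)), (0, (J : ℝ)), ((J : ℝ), 0), ((J : ℝ), 2 * (J : ℝ)),
      (2 * (J : ℝ), (J : ℝ)), (2 * (J : ℝ), 2 * (J : ℝ))})
    (P : Set (ℝ × ℝ))
    (hP : P = {p | ∃ x₀ x₁ x₂ : ℕ, x₀ ≤ J ∧ x₁ ≤ J ∧ x₂ ≤ J ∧
      p = (((x₀ : ℝ) + (x₁ : ℝ), (x₀ : ℝ) + (x₂ : ℝ)) : ℝ × ℝ)}) :
    {((1 : ℝ), (1 : ℝ))} + convexHull ℝ V ⊆ r • convexHull ℝ V + P := by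
  have hJ0 : (0 : ℝ) < J := by exact_mod_cast (show 0 < J by omega)
  have hrJ : 2 / 3 ≤ r * J := by
    rw [div_le_iff₀ (by positivity)] at hr1
    linarith
  change V = hexagonVertices J at hV
  change P = hexagonLatticePoints J at hP
  rintro _ ⟨_, rfl, q, hq, rfl⟩
  rw [hV, convexHull_hexagonVertices_eq_hexagon hJ0] at hq
  obtain ⟨a, b, hres, ha, hb⟩ := exists_intCast_sub_mem_hexagon (q.1 + 1) (q.2 + 1)
  have hab : ((a : ℝ), (b : ℝ)) ∈ hexagon J := intCast_mem_hexagon (N := J) hq hres ha hb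
  refine ⟨(q.1 + 1 - a, q.2 + 1 - b), ?_, ((a : ℝ), (b : ℝ)),
    hP ▸ intCast_mem_hexagonLatticePoints hab, ?_⟩
  · rw [hV, ← convexHull_smul, smul_hexagonVertices,
      convexHull_hexagonVertices_eq_hexagon (by positivity)]
    exact hexagon_mono hrJ hres
  · ext <;> simp <;> ring

theorem stmt15 (J : ℕ) (hJ : 2 < J) (r : ℝ)
    (hr1 : 2 / (3 * (J : ℝ)) ≤ r) (hr2 : r < 1 / ((J : ℝ) + 1))
    (V : Set (ℝ × ℝ))
    (hV : V = {((0 : ℝ), (0 : ℝ)), (0, (J : ℝ)), ((J : ℝ), 0), ((J : ℝ), 2 * (J : ℝ)),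
      (2 * (J : ℝ), (J : ℝ)), (2 * (J : ℝ), 2 * (J : ℝ))})
    (P : Set (ℝ × ℝ))
    (hP : P = {p | ∃ x₀ x₁ x₂ : ℕ, x₀ ≤ J ∧ x₁ ≤ J ∧ x₂ ≤ J ∧
      p = (((x₀ : ℝ) + (x₁ : ℝ), (x₀ : ℝ) + (x₂ : ℝ)) : ℝ × ℝ)}) :
    {((1 : ℝ), (1 : ℝ))} + convexHull ℝ V ⊆ r • convexHull ℝ V + P :=
  stmt15_general J hJ r hr1 V hV P hP
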